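/- If g_0 ⪰ g_1 ⪰ g_2 ⪰ ... is a decreasing sequence of vectors in L^p(Ω) under the subvector order, then lim_n g_n exists in the L^p norm and equals the infimum of {g_0, g_1, ...} with respect to the subvector order. -/

import Mathlib

open MeasureTheory Filter
open scoped ENNReal Topology

/-- `f` is a subvector of `g`: `f = g · χ_A` a.e. for some measurable set `A`. -/
def Subvec {α : Type*} [MeasurableSpace α] {μ : Measure α} {p : ENNReal}
    (f g : Lp ℂ p μ) : Prop :=
  ∃ A : Set α, MeasurableSet A ∧ (f : α → ℂ) =ᵐ[μ] A.indicator (g : α → ℂ)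

/-- If `g 0 ⪰ g 1 ⪰ g 2 ⪰ ⋯` is a `⪯`-decreasing sequence in `L^p(Ω)`, then
`lim_n g n` exists in the `L^p` norm and is the `⪯`-infimum of `{g 0, g 1, …}`. -/
theorem stmt4 {α : Type*} [MeasurableSpace α] (μ : Measure α) (p : ℝ) (hp : 1 ≤ p)
    [Fact (1 ≤ ENNReal.ofReal p)]
    (g : ℕ → Lp ℂ (ENNReal.ofReal p) μ) (hmono : ∀ n, Subvec (g (n + 1)) (g n)) :
    ∃ L : Lp ℂ (ENNReal.ofReal p) μ,
      Tendsto g atTop (nhds L) ∧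
      (∀ n, Subvec L (g n)) ∧
      (∀ h : Lp ℂ (ENNReal.ofReal p) μ, (∀ n, Subvec h (g n)) → Subvec h L) := by
  classical
  have hppos : 0 < p := lt_of_lt_of_le one_pos hp
  have hq0 : ENNReal.ofReal p ≠ 0 := by
    simp [ENNReal.ofReal_eq_zero, not_le, hppos]
  have hqtop : ENNReal.ofReal p ≠ ∞ := ENNReal.ofReal_ne_top
  have hqto : (ENNReal.ofReal p).toReal = p := ENNReal.toReal_ofReal hppos.le
  choose A hAm hAe using hmono
  set g0 : α → ℂ := (g 0 : α → ℂ) with hg0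
  set S : ℕ → Set α := fun n => ⋂ k ∈ Finset.range n, A k with hS
  have hSm : ∀ n, MeasurableSet (S n) :=
    fun n => MeasurableSet.biInter (Finset.range n).countable_toSet fun k _ => hAm k
  have hSmem : ∀ n x, x ∈ S n ↔ ∀ k < n, x ∈ A k := by
    intro n x
    simp [hS, Set.mem_iInter, Finset.mem_range]
  have hSanti : Antitone S := by
    intro n m hnm x hx
    rw [hSmem] at hx ⊢
    exact fun k hk => hx k (lt_of_lt_of_le hk hnm)
  have hSsucc : ∀ n, S (n + 1) = A n ∩ S n := by
    intro n
    ext x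
    rw [hSmem]
    simp only [Set.mem_inter_iff, hSmem]
    constructor
    · intro hx; exact ⟨hx n (Nat.lt_succ_self n), fun k hk => hx k (hk.trans (Nat.lt_succ_self n))⟩
    · rintro ⟨h1, h2⟩ k hk
      rcases Nat.lt_succ_iff_lt_or_eq.mp hk with hk' | rfl
      · exact h2 k hk'
      · exact h1
  -- key identity : g n = χ_{S n} g0 a.e.
  have key : ∀ n, (g n : α → ℂ) =ᵐ[μ] (S n).indicator g0 := by
    intro n
    induction n with
    | zero =>
      have : S 0 = Set.univ := by ext x; simp [hSmem]
      rw [this]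
      simp [Set.indicator_univ, hg0]
    | succ n ih =>
      refine (hAe n).trans ?_
      have h1 : (A n).indicator (g n : α → ℂ) =ᵐ[μ] (A n).indicator ((S n).indicator g0) := by
        filter_upwards [ih] with x hx
        simp only [Set.indicator_apply]
        split <;> simp [Set.indicator_apply, hx]
      refine h1.trans ?_
      rw [Set.indicator_indicator, ← hSsucc n]
  set T : Set α := ⋂ n, S n with hT
  have hTm : MeasurableSet T := MeasurableSet.iInter fun n => hSm n
  have hTsub : ∀ n, T ⊆ S n := fun n => Set.iInter_subset S n
  have hLmem : MemLp (T.indicator g0) (ENNReal.ofReal p) μ :=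
    (Lp.memLp (g 0)).indicator hTm
  refine ⟨hLmem.toLp _, ?_, ?_, ?_⟩
  · -- convergence in Lp
    rw [Lp.tendsto_Lp_iff_tendsto_eLpNorm']
    have hLc : (hLmem.toLp _ : α → ℂ) =ᵐ[μ] T.indicator g0 := hLmem.coeFn_toLp
    have hdiff : ∀ n, ((g n : α → ℂ) - (hLmem.toLp _ : α → ℂ)) =ᵐ[μ]
        (S n \ T).indicator g0 := by
      intro n
      filter_upwards [key n, hLc] with x h1 h2
      simp only [Pi.sub_apply, h1, h2]
      by_cases hxT : x ∈ T
      · have hxS : x ∈ S n := hTsub n hxT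
        simp [Set.indicator_of_mem hxS, Set.indicator_of_mem hxT,
          Set.indicator_of_notMem (fun hc => hc.2 hxT : x ∉ S n \ T)]
      · by_cases hxS : x ∈ S n
        · simp [Set.indicator_of_mem hxS, Set.indicator_of_notMem hxT,
            Set.indicator_of_mem (Set.mem_diff_of_mem hxS hxT)]
        · simp [Set.indicator_of_notMem hxS, Set.indicator_of_notMem hxT,
            Set.indicator_of_notMem (fun hc => hxS hc.1 : x ∉ S n \ T)]
    have heq : ∀ n, eLpNorm ((g n : α → ℂ) - (hLmem.toLp _ : α → ℂ)) (ENNReal.ofReal p) μ =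
        (∫⁻ x, (‖(S n \ T).indicator g0 x‖₊ : ℝ≥0∞) ^ p ∂μ) ^ (1 / p) := by
      intro n
      rw [eLpNorm_congr_ae (hdiff n), eLpNorm_eq_lintegral_rpow_enorm_toReal hq0 hqtop, hqto]
      rfl
    simp only [heq]
    have hbound_fin : ∫⁻ x, (‖g0 x‖₊ : ℝ≥0∞) ^ p ∂μ ≠ ∞ := by
      have := lintegral_rpow_enorm_lt_top_of_eLpNorm_lt_top hq0 hqtop (Lp.eLpNorm_lt_top (g 0))
      rw [hqto] at this
      exact this.ne
    have hmeas : ∀ n, AEMeasurable (fun x => (‖(S n \ T).indicator g0 x‖₊ : ℝ≥0∞) ^ p) μ := by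
      intro n
      have h0 : AEStronglyMeasurable ((S n \ T).indicator g0) μ :=
        (Lp.aestronglyMeasurable (g 0)).indicator ((hSm n).diff hTm)
      exact h0.enorm.pow_const p
    have hlim : Tendsto (fun n => ∫⁻ x, (‖(S n \ T).indicator g0 x‖₊ : ℝ≥0∞) ^ p ∂μ)
        atTop (𝓝 0) := by
      have h0 : (0 : ℝ≥0∞) = ∫⁻ _x, (0 : ℝ≥0∞) ∂μ := by simp
      rw [h0]
      refine tendsto_lintegral_of_dominated_convergence' (fun x => (‖g0 x‖₊ : ℝ≥0∞) ^ p)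
        hmeas (fun n => ?_) hbound_fin ?_
      · refine Filter.Eventually.of_forall fun x => ?_
        refine ENNReal.rpow_le_rpow ?_ hppos.le
        rw [ENNReal.coe_le_coe]
        by_cases hx : x ∈ S n \ T
        · simp [Set.indicator_of_mem hx]
        · simp [Set.indicator_of_notMem hx]
      · refine Filter.Eventually.of_forall fun x => ?_
        by_cases hxT : x ∈ T
        · have : ∀ n, ((‖(S n \ T).indicator g0 x‖₊ : ℝ≥0∞)) ^ p = 0 := by
            intro n
            rw [Set.indicator_of_notMem (fun hc => hc.2 hxT : x ∉ S n \ T)]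
            simp [ENNReal.zero_rpow_of_pos hppos]
          simp only [this]
          exact tendsto_const_nhds
        · obtain ⟨N, hN⟩ : ∃ N, x ∉ S N := by
            by_contra hcon
            push_neg at hcon
            exact hxT (Set.mem_iInter.mpr hcon)
          refine tendsto_atTop_of_eventually_const (i₀ := N) fun n hn => ?_
          rw [Set.indicator_of_notMem (fun hc => hN (hSanti hn hc.1) : x ∉ S n \ T)]
          simp [ENNReal.zero_rpow_of_pos hppos]
    have : Tendsto (fun n => (∫⁻ x, (‖(S n \ T).indicator g0 x‖₊ : ℝ≥0∞) ^ p ∂μ) ^ (1 / p))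
        atTop (𝓝 ((0 : ℝ≥0∞) ^ (1 / p))) := hlim.ennrpow_const (1 / p)
    rwa [ENNReal.zero_rpow_of_pos (by positivity)] at this
  · -- Subvec L (g n)
    intro n
    refine ⟨T, hTm, ?_⟩
    filter_upwards [hLmem.coeFn_toLp, key n] with x h1 h2
    rw [h1]
    by_cases hxT : x ∈ T
    · rw [Set.indicator_of_mem hxT, Set.indicator_of_mem hxT, h2,
        Set.indicator_of_mem (hTsub n hxT)]
    · rw [Set.indicator_of_notMem hxT, Set.indicator_of_notMem hxT]
  · -- infimum property
    intro h hh
    choose C hCm hCe using hh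
    refine ⟨C 0, hCm 0, ?_⟩
    have hall1 : ∀ᵐ x ∂μ, ∀ n, (h : α → ℂ) x = (C n).indicator (g n : α → ℂ) x :=
      MeasureTheory.ae_all_iff.mpr fun n => hCe n
    have hall2 : ∀ᵐ x ∂μ, ∀ n, (g n : α → ℂ) x = (S n).indicator g0 x :=
      MeasureTheory.ae_all_iff.mpr fun n => key n
    filter_upwards [hall1, hall2, hLmem.coeFn_toLp] with x h1 h2 h3
    have hgoal : (C 0).indicator (↑↑(MemLp.toLp (T.indicator g0) hLmem)) x =
        (C 0).indicator (T.indicator g0) x := by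
      by_cases hC0 : x ∈ C 0 <;> simp [Set.indicator_apply, hC0, h3]
    rw [hgoal]
    have hS0 : x ∈ S 0 := by rw [hSmem]; intro k hk; omega
    by_cases hhx : (h : α → ℂ) x = 0
    · rw [hhx]
      by_cases hC0 : x ∈ C 0
      · -- then g0 x = 0, so every indicator is 0
        have : g0 x = 0 := by
          have := h1 0
          rw [Set.indicator_of_mem hC0, h2 0, Set.indicator_of_mem hS0] at this
          rw [← this, hhx]
        simp [Set.indicator_apply, this]
      · rw [Set.indicator_of_notMem hC0]
    · -- h x ≠ 0 : then ∀ n, x ∈ C n ∧ x ∈ S n ∧ h x = g0 x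
      have hfacts : ∀ n, x ∈ C n ∧ x ∈ S n ∧ (h : α → ℂ) x = g0 x := by
        intro n
        have e1 := h1 n
        by_cases hCn : x ∈ C n
        · rw [Set.indicator_of_mem hCn, h2 n] at e1
          by_cases hSn : x ∈ S n
          · rw [Set.indicator_of_mem hSn] at e1
            exact ⟨hCn, hSn, e1⟩
          · rw [Set.indicator_of_notMem hSn] at e1
            exact absurd e1 hhx
        · rw [Set.indicator_of_notMem hCn] at e1
          exact absurd e1 hhx
      have hxT : x ∈ T := Set.mem_iInter.mpr fun n => (hfacts n).2.1
      rw [Set.indicator_of_mem (hfacts 0).1, Set.indicator_of_mem hxT]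
      exact (hfacts 0).2.2
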